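/- arXiv:2212.00243 — 5 statements merged into one kernel-verified Lean document; each statement's English description precedes it below -/
import Mathlib

section
/- Let n ≥ 2, let A be an invertible symmetric n×n real matrix, let g ∈ ℝ^{n−1}, and let u, v ∈ ℝⁿ satisfy B(g)·A·u = B(g)·A·v and uᵀAu = vᵀAv. Then either u = v, or ⟨w(g), u⟩ = −⟨w(g), v⟩ (so that u and v lie on opposite sides of, or on, the hyperplane {x ∈ ℝⁿ : ⟨w(g), x⟩ = 0}). In particular, if in addition ⟨w(g), u⟩ > 0 and ⟨w(g), v⟩ > 0, then u = v. -/
open Matrix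

/-- The matrix `B(g) = [I_{n-1} | g]`, here with `n = m + 1`. -/
def Bmat {m : ℕ} (g : Fin m → ℝ) : Matrix (Fin m) (Fin (m + 1)) ℝ :=
  fun i j => if (j : ℕ) = (i : ℕ) then 1 else if (j : ℕ) = m then g i else 0

/-- The vector `w(g) = (-g, 1) ∈ ℝⁿ`, with `n = m + 1`. -/
def wvec {m : ℕ} (g : Fin m → ℝ) : Fin (m + 1) → ℝ :=
  fun j => if h : (j : ℕ) < m then -g ⟨j, h⟩ else 1

lemma Bmat_apply {m : ℕ} (g : Fin m → ℝ) (i : Fin m) (j : Fin (m + 1)) :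
    Bmat g i j = (if j = Fin.castSucc i then 1 else 0) +
      (if j = Fin.last m then g i else 0) := by
  simp only [Bmat]
  rcases eq_or_ne j (Fin.last m) with rfl | hlast
  · have hi : ¬ ((Fin.last m : ℕ) = (i : ℕ)) := by simp [Fin.last]; omega
    have h2 : ¬ (Fin.last m = Fin.castSucc i) := by
      intro h; exact hi (by rw [h]; simp)
    rw [if_neg hi, if_pos (Fin.val_last m), if_neg h2, if_pos rfl]; ring
  · have hj : ¬ ((j : ℕ) = m) := fun h => hlast (Fin.ext h)
    rcases eq_or_ne j (Fin.castSucc i) with rfl | hc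
    · have : ((Fin.castSucc i : Fin (m+1)) : ℕ) = (i : ℕ) := by simp
      rw [if_pos this, if_pos rfl, if_neg hlast]; ring
    · have hne : ¬ ((j : ℕ) = (i : ℕ)) := fun h => hc (Fin.ext (by simpa using h))
      rw [if_neg hne, if_neg hj, if_neg hc, if_neg hlast]; ring

lemma Bmat_mulVec {m : ℕ} (g : Fin m → ℝ) (x : Fin (m + 1) → ℝ) (i : Fin m) :
    (Bmat g).mulVec x i = x (Fin.castSucc i) + g i * x (Fin.last m) := by
  simp only [mulVec, dotProduct, Bmat_apply, add_mul, ite_mul, one_mul, zero_mul,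
    Finset.sum_add_distrib, Finset.sum_ite_eq', Finset.mem_univ, if_true]

lemma wvec_castSucc {m : ℕ} (g : Fin m → ℝ) (i : Fin m) :
    wvec g (Fin.castSucc i) = -g i := by
  simp [wvec, i.isLt]

lemma wvec_last {m : ℕ} (g : Fin m → ℝ) : wvec g (Fin.last m) = 1 := by
  simp [wvec]

/-- Injectivity computation for the left projection: if `B(g) A u = B(g) A v` and
`uᵀ A u = vᵀ A v`, then either `u = v` or `⟨w(g), u⟩ = -⟨w(g), v⟩`; in particular if both
points lie strictly above the hyperplane `⟨w(g), ·⟩ = 0`, they coincide. -/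
theorem stmt3 (m : ℕ) (hm : 1 ≤ m) (A : Matrix (Fin (m + 1)) (Fin (m + 1)) ℝ)
    (hA : IsUnit A) (hAsymm : A.IsSymm) (g : Fin m → ℝ) (u v : Fin (m + 1) → ℝ)
    (h1 : (Bmat g * A).mulVec u = (Bmat g * A).mulVec v)
    (h2 : u ⬝ᵥ A.mulVec u = v ⬝ᵥ A.mulVec v) :
    (u = v ∨ wvec g ⬝ᵥ u = -(wvec g ⬝ᵥ v)) ∧
    (0 < wvec g ⬝ᵥ u → 0 < wvec g ⬝ᵥ v → u = v) := by
  set y : Fin (m + 1) → ℝ := A.mulVec (u - v) with hy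
  have hker : (Bmat g).mulVec y = 0 := by
    have : (Bmat g * A).mulVec (u - v) = 0 := by
      rw [Matrix.mulVec_sub, h1, sub_self]
    rw [hy, Matrix.mulVec_mulVec, this]
  set c : ℝ := y (Fin.last m) with hc
  have hyw : y = c • wvec g := by
    funext j
    induction j using Fin.lastCases with
    | last => simp [hc, wvec_last]
    | cast i =>
      have := congrFun hker i
      rw [Bmat_mulVec] at this
      simp only [Pi.zero_apply] at this
      have : y (Fin.castSucc i) = -g i * c := by linarith
      simp [this, wvec_castSucc]; ring
  -- symmetry of A
  have hsym : ∀ a b : Fin (m + 1) → ℝ, a ⬝ᵥ A.mulVec b = b ⬝ᵥ A.mulVec a := by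
    intro a b
    rw [Matrix.dotProduct_mulVec, ← Matrix.mulVec_transpose, hAsymm.eq,
      dotProduct_comm]
  have key : (u + v) ⬝ᵥ y = 0 := by
    rw [hy, Matrix.mulVec_sub, dotProduct_sub, add_dotProduct,
      add_dotProduct]
    have h3 : v ⬝ᵥ A.mulVec u = u ⬝ᵥ A.mulVec v := hsym v u
    linarith
  have key2 : c * (wvec g ⬝ᵥ u + wvec g ⬝ᵥ v) = 0 := by
    rw [hyw, dotProduct_smul, smul_eq_mul, dotProduct_comm,
      dotProduct_add] at key
    linarith
  have huv : c = 0 → u = v := by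
    intro h0
    have : A.mulVec (u - v) = 0 := by rw [← hy, hyw, h0, zero_smul]
    have hinj := (Matrix.mulVec_injective_iff_isUnit).2 hA
    have := hinj (by rw [this, Matrix.mulVec_zero] : A.mulVec (u - v) = A.mulVec 0)
    have := sub_eq_zero.mp (by simpa using this)
    exact this
  rcases mul_eq_zero.mp key2 with h0 | hsum
  · exact ⟨Or.inl (huv h0), fun _ _ => huv h0⟩
  · refine ⟨Or.inr (by linarith), fun hu hv => ?_⟩
    linarith
end

section
/- Let n ≥ 1, let A be an invertible symmetric n×n real matrix, let w ∈ ℝⁿ with wᵀA⁻¹w ≠ 0, and let u ∈ ℝⁿ. Define the mirror point u_m := u − (2⟨w, u⟩ / (wᵀA⁻¹w))·A⁻¹w. Then: (i) u_mᵀ A u_m = uᵀ A u; (ii) ⟨w, u_m⟩ = −⟨w, u⟩; and (iii) the line {u + α·A⁻¹w : α ∈ ℝ} meets the quadric {z ∈ ℝⁿ : zᵀAz = uᵀAu} exactly at the two points u and u_m, and these coincide if and only if ⟨w, u⟩ = 0. -/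
open Matrix

/-- The mirror point construction: for invertible symmetric `A`, `w` with `wᵀ A⁻¹ w ≠ 0`,
and `u ∈ ℝⁿ`, the mirror point `u_m = u - (2⟨w,u⟩/(wᵀA⁻¹w)) A⁻¹ w` satisfies
(i) `u_mᵀ A u_m = uᵀ A u`; (ii) `⟨w, u_m⟩ = -⟨w, u⟩`; (iii) the line through `u` in
direction `A⁻¹ w` meets the quadric `{z : zᵀAz = uᵀAu}` exactly at `u` and `u_m`, which
coincide iff `⟨w, u⟩ = 0`. -/
theorem stmt4 (n : ℕ) (hn : 1 ≤ n) (A : Matrix (Fin n) (Fin n) ℝ)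
    (hA : IsUnit A) (hAsymm : A.IsSymm) (w u : Fin n → ℝ)
    (hw : w ⬝ᵥ A⁻¹.mulVec w ≠ 0) (um : Fin n → ℝ)
    (hum : um = u - (2 * (w ⬝ᵥ u) / (w ⬝ᵥ A⁻¹.mulVec w)) • A⁻¹.mulVec w) :
    um ⬝ᵥ A.mulVec um = u ⬝ᵥ A.mulVec u ∧
    w ⬝ᵥ um = -(w ⬝ᵥ u) ∧
    (∀ α : ℝ, (u + α • A⁻¹.mulVec w) ⬝ᵥ A.mulVec (u + α • A⁻¹.mulVec w) = u ⬝ᵥ A.mulVec u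
       ↔ (u + α • A⁻¹.mulVec w = u ∨ u + α • A⁻¹.mulVec w = um)) ∧
    (um = u ↔ w ⬝ᵥ u = 0) := by
  set v := A⁻¹.mulVec w with hv
  have hdet : IsUnit A.det := (Matrix.isUnit_iff_isUnit_det A).mp hA
  have hAv : A.mulVec v = w := by
    rw [hv, Matrix.mulVec_mulVec, Matrix.mul_nonsing_inv A hdet, Matrix.one_mulVec]
  have hsym : ∀ x y : Fin n → ℝ, x ⬝ᵥ A.mulVec y = y ⬝ᵥ A.mulVec x := by
    intro x y
    rw [Matrix.dotProduct_mulVec, ← Matrix.mulVec_transpose, hAsymm.eq,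
      dotProduct_comm]
  set c := w ⬝ᵥ v with hc
  set s := w ⬝ᵥ u with hs
  have hvAv : v ⬝ᵥ A.mulVec v = c := by rw [hAv, dotProduct_comm]
  have huAv : u ⬝ᵥ A.mulVec v = s := by rw [hAv, dotProduct_comm]
  have hvAu : v ⬝ᵥ A.mulVec u = s := by rw [hsym v u, huAv]
  have hvne : v ≠ 0 := by
    intro h
    apply hw
    rw [hc, h, dotProduct_zero]
  have expand : ∀ k : ℝ, (u + k • v) ⬝ᵥ A.mulVec (u + k • v)
      = u ⬝ᵥ A.mulVec u + 2 * k * s + k ^ 2 * c := by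
    intro k
    simp only [Matrix.mulVec_add, Matrix.mulVec_smul, dotProduct_add,
      add_dotProduct, smul_dotProduct, dotProduct_smul,
      huAv, hvAu, hvAv, smul_eq_mul]
    ring
  have hum' : um = u + (-(2 * s / c)) • v := by
    rw [hum, sub_eq_add_neg, neg_smul]
  refine ⟨?_, ?_, ?_, ?_⟩
  · rw [hum', expand]
    field_simp
    ring
  · rw [hum', dotProduct_add, dotProduct_smul, smul_eq_mul, ← hs, ← hc]
    field_simp
    ring
  · intro α
    rw [expand]
    constructor
    · intro h
      have h2 : α * (2 * s + α * c) = 0 := by linarith [h]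
      rcases mul_eq_zero.mp h2 with h0 | h1
      · left; rw [h0, zero_smul, add_zero]
      · right
        rw [hum']
        congr 1
        have : α = -(2 * s / c) := by field_simp; linarith
        rw [this]
    · rintro (h | h)
      · have : α • v = 0 := by
          have := h
          rwa [add_eq_left] at this
        rcases smul_eq_zero.mp this with h0 | h0
        · rw [h0]; ring
        · exact absurd h0 hvne
      · rw [hum'] at h
        have h2 : (α - (-(2 * s / c))) • v = 0 := by
          rw [sub_smul]
          have := sub_eq_zero.mpr h
          simpa [add_sub_add_left_eq_sub] using this
        rcases smul_eq_zero.mp h2 with h0 | h0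
        · have hα : α = -(2 * s / c) := by linarith [sub_eq_zero.mp (by linarith [h0] : α - (-(2 * s / c)) = 0)]
          rw [hα]
          field_simp
          ring
        · exact absurd h0 hvne
  · rw [hum']
    constructor
    · intro h
      have h2 : (-(2 * s / c)) • v = 0 := by
        have := h
        rwa [add_eq_left] at this
      rcases smul_eq_zero.mp h2 with h0 | h0
      · have : 2 * s / c = 0 := by linarith
        have := (div_eq_zero_iff.mp this).resolve_right hw
        linarith
      · exact absurd h0 hvne
    · intro h
      rw [h]
      simp
end

section
/- For all s ∈ (0,1], n ∈ ℤ, η ∈ ℝ and 0 < u < p < 1, the Volterra kernel equals its regularized form: K_n(η; p, u) = K̃_n(η; p, u). -/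
open Real MeasureTheory intervalIntegral

/-- The Volterra kernel `K_n(η; p, u)`. -/
noncomputable def Kkernel (s : ℝ) (n : ℤ) (η p u : ℝ) : ℝ :=
  ∫ t in u..p,
    (t * Real.sqrt (t ^ 2 + s ^ 2 * (p ^ 2 - t ^ 2)) *
        Real.cos ((η / s) * Real.sqrt (p ^ 2 - t ^ 2)) *
        (Polynomial.Chebyshev.T ℝ |n|).eval
          (((1 - u) ^ 2 + 1 - t ^ 2) / (2 * (1 - u)))) /
      (Real.sqrt (p ^ 2 - t ^ 2) *
        Real.sqrt (1 - (((1 - u) ^ 2 + 1 - t ^ 2) / (2 * (1 - u))) ^ 2))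

/-- The regularized Volterra kernel `K̃_n(η; p, u)`, obtained from `K_n` by the change of
variables `t = u + v (p - u)`. -/
noncomputable def KkernelReg (s : ℝ) (n : ℤ) (η p u : ℝ) : ℝ :=
  Real.sqrt (1 - u) *
    ∫ v in (0 : ℝ)..1,
      (fun w =>
        (w * Real.sqrt (w ^ 2 + s ^ 2 * (p ^ 2 - w ^ 2)) *
            Real.cos ((η / s) * Real.sqrt (p ^ 2 - w ^ 2)) *
            (Polynomial.Chebyshev.T ℝ |n|).eval
              (((1 - u) ^ 2 + 1 - w ^ 2) / (2 * (1 - u)))) /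
          (Real.sqrt v * Real.sqrt (1 - v) * Real.sqrt (p + w) * Real.sqrt (w + u) *
            Real.sqrt (1 + (u ^ 2 - w ^ 2) / (4 * (1 - u)))))
        (u + v * (p - u))

/-- Auxiliary integrand with fully factored denominator. -/
noncomputable def Khelper (s : ℝ) (n : ℤ) (η p u t : ℝ) : ℝ :=
  (t * Real.sqrt (t ^ 2 + s ^ 2 * (p ^ 2 - t ^ 2)) *
      Real.cos ((η / s) * Real.sqrt (p ^ 2 - t ^ 2)) *
      (Polynomial.Chebyshev.T ℝ |n|).eval
        (((1 - u) ^ 2 + 1 - t ^ 2) / (2 * (1 - u)))) /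
    (Real.sqrt (t - u) * Real.sqrt (p - t) * Real.sqrt (p + t) * Real.sqrt (t + u) *
      Real.sqrt (1 + (u ^ 2 - t ^ 2) / (4 * (1 - u))))

/-- The Volterra kernel equals its regularized form: `K_n(η; p, u) = K̃_n(η; p, u)` for
`0 < u < p < 1`. -/
theorem stmt13 (s : ℝ) (hs : s ∈ Set.Ioc (0 : ℝ) 1) (n : ℤ) (η u p : ℝ)
    (hu : 0 < u) (hup : u < p) (hp : p < 1) :
    Kkernel s n η p u = KkernelReg s n η p u := by
  obtain ⟨hs0, -⟩ := hs
  have h1u : (0:ℝ) < 1 - u := by linarith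
  have hpu : (0:ℝ) < p - u := by linarith
  have hs1u : Real.sqrt (1 - u) ≠ 0 := by positivity
  have hQpos : ∀ t : ℝ, u ≤ t → t ≤ p → 0 ≤ 1 + (u ^ 2 - t ^ 2) / (4 * (1 - u)) := by
    intro t h1 h2
    have heq : 1 + (u ^ 2 - t ^ 2) / (4 * (1 - u))
        = ((2 - u - t) * (2 - u + t)) / (4 * (1 - u)) := by
      field_simp
      ring
    rw [heq]
    apply div_nonneg _ (by linarith)
    exact mul_nonneg (by linarith) (by linarith)
  have key1 : Kkernel s n η p u = Real.sqrt (1 - u) * ∫ t in u..p, Khelper s n η p u t := by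
    unfold Kkernel
    rw [← intervalIntegral.integral_const_mul]
    apply intervalIntegral.integral_congr
    intro t ht
    rw [Set.uIcc_of_le hup.le] at ht
    obtain ⟨htu, htp⟩ := ht
    have h1 : (0:ℝ) ≤ t - u := by linarith
    have h2 : (0:ℝ) ≤ p - t := by linarith
    have h3 : (0:ℝ) ≤ t + u := by linarith
    have hQ := hQpos t htu htp
    have hX : 1 - (((1 - u) ^ 2 + 1 - t ^ 2) / (2 * (1 - u))) ^ 2
        = (t - u) * ((t + u) * ((1 + (u ^ 2 - t ^ 2) / (4 * (1 - u))) / (1 - u))) := by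
      field_simp
      ring
    have hpt : p ^ 2 - t ^ 2 = (p - t) * (p + t) := by ring
    simp only [Khelper]
    rw [hpt, hX, Real.sqrt_mul h2, Real.sqrt_mul h1, Real.sqrt_mul h3, Real.sqrt_div hQ]
    have hdd : Real.sqrt (p - t) * Real.sqrt (p + t) *
        (Real.sqrt (t - u) * (Real.sqrt (t + u) *
          (Real.sqrt (1 + (u ^ 2 - t ^ 2) / (4 * (1 - u))) / Real.sqrt (1 - u))))
        = (Real.sqrt (t - u) * Real.sqrt (p - t) * Real.sqrt (p + t) * Real.sqrt (t + u) *
            Real.sqrt (1 + (u ^ 2 - t ^ 2) / (4 * (1 - u)))) / Real.sqrt (1 - u) := by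
      ring
    rw [hdd, div_div_eq_mul_div, mul_comm _ (Real.sqrt (1 - u)), mul_div_assoc]
  have key2 : KkernelReg s n η p u = Real.sqrt (1 - u) * ∫ t in u..p, Khelper s n η p u t := by
    unfold KkernelReg
    congr 1
    have hcong : Set.EqOn
        (fun v : ℝ =>
          (fun w =>
            (w * Real.sqrt (w ^ 2 + s ^ 2 * (p ^ 2 - w ^ 2)) *
                Real.cos ((η / s) * Real.sqrt (p ^ 2 - w ^ 2)) *
                (Polynomial.Chebyshev.T ℝ |n|).eval
                  (((1 - u) ^ 2 + 1 - w ^ 2) / (2 * (1 - u)))) /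
              (Real.sqrt v * Real.sqrt (1 - v) * Real.sqrt (p + w) * Real.sqrt (w + u) *
                Real.sqrt (1 + (u ^ 2 - w ^ 2) / (4 * (1 - u)))))
            (u + v * (p - u)))
        (fun v : ℝ => (p - u) * Khelper s n η p u ((p - u) * v + u)) (Set.uIcc 0 1) := by
      intro v hv
      rw [Set.uIcc_of_le zero_le_one] at hv
      obtain ⟨hv0, hv1⟩ := hv
      have harg : (p - u) * v + u = u + v * (p - u) := by ring
      simp only [harg, Khelper]
      have e1 : u + v * (p - u) - u = v * (p - u) := by ring
      have e2 : p - (u + v * (p - u)) = (1 - v) * (p - u) := by ring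
      rw [e1, e2, Real.sqrt_mul hv0, Real.sqrt_mul (by linarith : (0:ℝ) ≤ 1 - v)]
      have hss : Real.sqrt (p - u) * Real.sqrt (p - u) = p - u := Real.mul_self_sqrt hpu.le
      have e3 : Real.sqrt v * Real.sqrt (p - u) * (Real.sqrt (1 - v) * Real.sqrt (p - u)) *
          Real.sqrt (p + (u + v * (p - u))) * Real.sqrt (u + v * (p - u) + u) *
          Real.sqrt (1 + (u ^ 2 - (u + v * (p - u)) ^ 2) / (4 * (1 - u)))
          = (p - u) * (Real.sqrt v * Real.sqrt (1 - v) *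
              Real.sqrt (p + (u + v * (p - u))) * Real.sqrt (u + v * (p - u) + u) *
              Real.sqrt (1 + (u ^ 2 - (u + v * (p - u)) ^ 2) / (4 * (1 - u)))) := by
        calc Real.sqrt v * Real.sqrt (p - u) * (Real.sqrt (1 - v) * Real.sqrt (p - u)) *
            Real.sqrt (p + (u + v * (p - u))) * Real.sqrt (u + v * (p - u) + u) *
            Real.sqrt (1 + (u ^ 2 - (u + v * (p - u)) ^ 2) / (4 * (1 - u)))
            = (Real.sqrt (p - u) * Real.sqrt (p - u)) * (Real.sqrt v * Real.sqrt (1 - v) *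
              Real.sqrt (p + (u + v * (p - u))) * Real.sqrt (u + v * (p - u) + u) *
              Real.sqrt (1 + (u ^ 2 - (u + v * (p - u)) ^ 2) / (4 * (1 - u)))) := by ring
          _ = _ := by rw [hss]
      rw [e3, mul_div_assoc', mul_div_mul_left _ _ hpu.ne']
    rw [intervalIntegral.integral_congr hcong, intervalIntegral.integral_const_mul,
      intervalIntegral.integral_comp_mul_add (fun t => Khelper s n η p u t) hpu.ne' u]
    have e4 : (p - u) * 0 + u = u := by ring
    have e5 : (p - u) * 1 + u = p := by ring
    rw [e4, e5, smul_eq_mul, ← mul_assoc, mul_inv_cancel₀ hpu.ne', one_mul]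
  rw [key1, key2]
end

section
/- For all s ∈ (0,1], n ∈ ℤ, η ∈ ℝ and p ∈ (0,1), the regularized Volterra kernel on the diagonal satisfies K̃_n(η; p, p) = π p √(1 − p) / 2. In particular it is nonzero for every p ∈ (0,1), uniformly in n and η. -/
open Real MeasureTheory intervalIntegral

/-!
On the diagonal `u = p` the substitution `w(v)` is constantly `p`, so the cosine factor is
`cos 0 = 1` and the Chebyshev argument is `1`, where every `T_m` equals `1`. The integrand
collapses to `(p / 2) / (√v √(1 - v))`, whose integral over `[0, 1]` is `π`, since
`arcsin (2v - 1)` is an antiderivative.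
-/

theorem hasDerivAt_arcsin_two_mul_sub_one {v : ℝ} (hv0 : 0 < v) (hv1 : v < 1) :
    HasDerivAt (fun x => arcsin (2 * x - 1)) (√v * √(1 - v))⁻¹ v := by
  have hsqrt : √(1 - (2 * v - 1) ^ 2) = 2 * (√v * √(1 - v)) := by
    rw [show 1 - (2 * v - 1) ^ 2 = 2 ^ 2 * (v * (1 - v)) by ring, sqrt_mul (by positivity),
      sqrt_sq zero_le_two, sqrt_mul hv0.le]
  have h := (hasDerivAt_arcsin (x := 2 * v - 1) (by linarith) (by linarith)).comp v
    (((hasDerivAt_id v).const_mul 2).sub_const 1)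
  refine h.congr_deriv ?_
  rw [hsqrt]
  field_simp

theorem integral_inv_sqrt_mul_sqrt_one_sub :
    ∫ v in (0 : ℝ)..1, (√v * √(1 - v))⁻¹ = π := by
  have hcont : ContinuousOn (fun x : ℝ => arcsin (2 * x - 1)) (Set.Icc 0 1) := by fun_prop
  have hderiv : ∀ v ∈ Set.Ioo (0 : ℝ) 1,
      HasDerivAt (fun x => arcsin (2 * x - 1)) (√v * √(1 - v))⁻¹ v :=
    fun v hv => hasDerivAt_arcsin_two_mul_sub_one hv.1 hv.2
  have hint : IntervalIntegrable (fun v : ℝ => (√v * √(1 - v))⁻¹) volume 0 1 := by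
    refine intervalIntegrable_deriv_of_nonneg (g := fun x => arcsin (2 * x - 1)) ?_ ?_ ?_
    · simpa [Set.uIcc_of_le zero_le_one] using hcont
    · simpa using hderiv
    · intro v _; positivity
  rw [integral_eq_sub_of_hasDerivAt_of_le zero_le_one hcont hderiv hint]
  norm_num

theorem KkernelReg_self (s : ℝ) (n : ℤ) (η : ℝ) {p : ℝ} (hp0 : 0 < p) (hp1 : p < 1) :
    KkernelReg s n η p p = π * p * √(1 - p) / 2 := by
  have hcheb_arg : ((1 - p) ^ 2 + 1 - p ^ 2) / (2 * (1 - p)) = 1 := by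
    rw [div_eq_one_iff_eq (by linarith)]; ring
  have hsqrt_two_mul : √(p + p) * √(p + p) = 2 * p := by
    rw [mul_self_sqrt (by linarith)]; ring
  unfold KkernelReg
  rw [integral_congr (g := fun v => p / 2 * (√v * √(1 - v))⁻¹) fun v _ => ?_,
    intervalIntegral.integral_const_mul, integral_inv_sqrt_mul_sqrt_one_sub]
  · ring
  simp only [sub_self, mul_zero, add_zero, sqrt_zero, cos_zero, zero_div, sqrt_one, hcheb_arg,
    Polynomial.Chebyshev.T_eval_one, sqrt_sq hp0.le, mul_one]
  rw [mul_assoc _ (√(p + p)), hsqrt_two_mul]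
  field_simp

theorem stmt14_general (s : ℝ) (n : ℤ) (η p : ℝ)
    (hp : p ∈ Set.Ioo (0 : ℝ) 1) :
    KkernelReg s n η p p = π * p * Real.sqrt (1 - p) / 2 ∧
      KkernelReg s n η p p ≠ 0 := by
  obtain ⟨hp0, hp1⟩ := hp
  rw [KkernelReg_self s n η hp0 hp1]
  refine ⟨rfl, ?_⟩
  have hsqrt_pos : 0 < √(1 - p) := sqrt_pos.2 (by linarith)
  positivity

/-- On the diagonal, the regularized Volterra kernel equals `π p √(1-p) / 2`; in
particular it is nonzero for `p ∈ (0,1)`, uniformly in `n` and `η`. -/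
theorem stmt14 (s : ℝ) (hs : s ∈ Set.Ioc (0 : ℝ) 1) (n : ℤ) (η p : ℝ)
    (hp : p ∈ Set.Ioo (0 : ℝ) 1) :
    KkernelReg s n η p p = π * p * Real.sqrt (1 - p) / 2 ∧
      KkernelReg s n η p p ≠ 0 :=
  stmt14_general s n η p hp
end

section
/- Fix s ∈ (0,1], n ∈ ℤ, η ∈ ℝ, and ε, ε₁ ∈ (0, 1/2). Then there exists a constant M > 0 such that for all (p, u) with ε ≤ u ≤ p ≤ 1 − ε₁: |K̃_n(η; p, u)| ≤ M; moreover, for each fixed u ∈ [ε, 1 − ε₁], the map p ↦ K̃_n(η; p, u) is differentiable at every p with u < p < 1 − ε₁ and its derivative satisfies |∂_p K̃_n(η; p, u)| ≤ M there. -/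
open Real MeasureTheory intervalIntegral

/-!
Write `K̃ = √(1 - u) ∫₀¹ φ(v) G(u, v, p) dv`, where `φ(v) = 1 / √(v (1 - v))` is integrable
and `G` is the regular part of the integrand. On the compact region `ε ≤ u ≤ p ≤ 1 - ε₁`,
`0 ≤ v ≤ 1`, the function `G` is continuous, and its `p`-derivative, which exists wherever
`v < 1` and `u < p`, extends continuously to the whole region: the only factor that is not
obviously smooth there, `cos ((η / s) √(p² - w²))`, is a smooth function of `p² - w² ≥ 0`.
So `G` and `∂ₚG` are bounded by compactness, and differentiation under the integral sign bounds
`K̃` and `∂ₚK̃` by `∫ φ` times these bounds.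
-/

open Set Filter Topology

noncomputable def arcsineWeight (v : ℝ) : ℝ := (√v * √(1 - v))⁻¹

lemma arcsineWeight_le {v : ℝ} (hv : v ∈ Icc (0 : ℝ) 1) :
    arcsineWeight v ≤ (√v)⁻¹ + (√(1 - v))⁻¹ := by
  obtain ⟨hv0, hv1⟩ := hv
  have ha := sqrt_nonneg v
  have hb := sqrt_nonneg (1 - v)
  rcases ha.eq_or_lt with ha0 | ha0
  · simp [arcsineWeight, ← ha0]
  rcases hb.eq_or_lt with hb0 | hb0
  · simp [arcsineWeight, ← hb0]
  -- `√v + √(1 - v) ≥ 1` because its square is `1 + 2 √v √(1 - v)`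
  have hsum : 1 ≤ √v + √(1 - v) := by
    nlinarith [sq_sqrt hv0, sq_sqrt (sub_nonneg.2 hv1), mul_pos ha0 hb0]
  rw [arcsineWeight, mul_inv, ← sub_nonneg]
  field_simp
  nlinarith

lemma intervalIntegrable_inv_sqrt {b : ℝ} (hb : 0 ≤ b) :
    IntervalIntegrable (fun v => (√v)⁻¹) volume 0 b := by
  refine (intervalIntegrable_rpow' (r := -(1 / 2)) (by norm_num)).congr fun v hv => ?_
  rw [uIoc_of_le hb] at hv
  simp only [sqrt_eq_rpow, rpow_neg hv.1.le]

lemma intervalIntegrable_arcsineWeight : IntervalIntegrable arcsineWeight volume 0 1 := by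
  have h1 : IntervalIntegrable (fun v : ℝ => (√(1 - v))⁻¹) volume 0 1 := by
    simpa using ((intervalIntegrable_inv_sqrt zero_le_one).comp_sub_left 1).symm
  refine ((intervalIntegrable_inv_sqrt zero_le_one).add h1).mono_fun'
    (by unfold arcsineWeight; fun_prop) ?_
  refine (ae_restrict_iff' measurableSet_uIoc).2 (Eventually.of_forall fun v hv => ?_)
  rw [uIoc_of_le zero_le_one] at hv
  dsimp only
  rw [Real.norm_of_nonneg (by unfold arcsineWeight; positivity)]
  exact arcsineWeight_le (Ioc_subset_Icc_self hv)

section WeightedIntegral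

variable {φ g : ℝ → ℝ} {a b C : ℝ}

lemma abs_integral_mul_le (hab : a ≤ b) (hφ : IntervalIntegrable φ volume a b)
    (hg : ∀ v ∈ Icc a b, |g v| ≤ C) :
    |∫ v in a..b, φ v * g v| ≤ (∫ v in a..b, |φ v|) * C := by
  rw [← Real.norm_eq_abs, ← intervalIntegral.integral_mul_const]
  refine norm_integral_le_of_norm_le hab (Eventually.of_forall fun v hv => ?_)
    (hφ.abs.mul_const C)
  rw [norm_mul, Real.norm_eq_abs, Real.norm_eq_abs]
  exact mul_le_mul_of_nonneg_left (hg v (Ioc_subset_Icc_self hv)) (abs_nonneg _)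

lemma hasDerivAt_integral_mul {G G' : ℝ → ℝ → ℝ} {U : Set ℝ} {p₀ : ℝ} (hab : a ≤ b)
    (hU : U ∈ 𝓝 p₀) (hφ : IntervalIntegrable φ volume a b)
    (hG : ∀ p ∈ U, ContinuousOn (G p) (Icc a b)) (hG' : ContinuousOn (G' p₀) (Icc a b))
    (hG'_le : ∀ p ∈ U, ∀ v ∈ Icc a b, |G' p v| ≤ C)
    (hGG' : ∀ p ∈ U, ∀ v ∈ Ioo a b, HasDerivAt (G · v) (G' p v) p) :
    HasDerivAt (fun p => ∫ v in a..b, φ v * G p v) (∫ v in a..b, φ v * G' p₀ v) p₀ := by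
  rw [← uIcc_of_le hab] at hG hG'
  refine (hasDerivAt_integral_of_dominated_loc_of_deriv_le (F' := fun p v => φ v * G' p v)
    (bound := fun v => |φ v| * C) hU
    (eventually_of_mem hU fun p hp => (hφ.mul_continuousOn (hG p hp)).def'.aestronglyMeasurable)
    (hφ.mul_continuousOn (hG p₀ (mem_of_mem_nhds hU)))
    (hφ.mul_continuousOn hG').def'.aestronglyMeasurable ?_ (hφ.abs.mul_const C) ?_).2
  · refine Eventually.of_forall fun v hv p hp => ?_
    rw [uIoc_of_le hab] at hv
    rw [norm_mul, Real.norm_eq_abs, Real.norm_eq_abs]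
    exact mul_le_mul_of_nonneg_left (hG'_le p hp v (Ioc_subset_Icc_self hv)) (abs_nonneg _)
  · filter_upwards [Measure.ae_ne volume b] with v hvb hv p hp
    rw [uIoc_of_le hab] at hv
    exact (hGG' p hp v ⟨hv.1, hv.2.lt_of_ne hvb⟩).const_mul (φ v)

end WeightedIntegral

lemma hasDerivAt_cos_mul_sqrt (c : ℝ) {y : ℝ} (hy : 0 < y) :
    HasDerivAt (fun y => cos (c * √y)) (-(c ^ 2 / 2) * sinc (c * √y)) y := by
  refine ((hasDerivAt_sqrt hy.ne').const_mul c).cos.congr_deriv ?_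
  rcases eq_or_ne c 0 with rfl | hc
  · simp
  have hy' := sqrt_pos.2 hy
  rw [sinc_of_ne_zero (by positivity)]
  field_simp

section PartialDeriv

variable {X : Type*} [TopologicalSpace X] {K S : Set (X × ℝ)} {f g : X → ℝ → ℝ}

def HasContinuousPartialDerivOn (f : X → ℝ → ℝ) (K S : Set (X × ℝ)) : Prop :=
  ContinuousOn (Function.uncurry f) K ∧
    ∃ f' : X × ℝ → ℝ, ContinuousOn f' K ∧ ∀ x ∈ S, HasDerivAt (f x.1) (f' x) x.2

namespace HasContinuousPartialDerivOn

lemma of_continuous {q : X → ℝ} (hq : Continuous q) :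
    HasContinuousPartialDerivOn (fun x _ => q x) K S :=
  ⟨(hq.comp continuous_fst).continuousOn, fun _ => 0, continuousOn_const,
    fun _ _ => hasDerivAt_const _ _⟩

lemma const (c : ℝ) : HasContinuousPartialDerivOn (fun (_ : X) _ => c) K S :=
  of_continuous continuous_const

lemma id : HasContinuousPartialDerivOn (fun (_ : X) p => p) K S :=
  ⟨continuous_snd.continuousOn, fun _ => 1, continuousOn_const, fun _ _ => hasDerivAt_id _⟩

lemma add (hf : HasContinuousPartialDerivOn f K S) (hg : HasContinuousPartialDerivOn g K S) :
    HasContinuousPartialDerivOn (fun x p => f x p + g x p) K S := by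
  obtain ⟨hfc, f', hf'c, hf'⟩ := hf
  obtain ⟨hgc, g', hg'c, hg'⟩ := hg
  exact ⟨hfc.add hgc, fun x => f' x + g' x, hf'c.add hg'c,
    fun x hx => (hf' x hx).add (hg' x hx)⟩

lemma sub (hf : HasContinuousPartialDerivOn f K S) (hg : HasContinuousPartialDerivOn g K S) :
    HasContinuousPartialDerivOn (fun x p => f x p - g x p) K S := by
  obtain ⟨hfc, f', hf'c, hf'⟩ := hf
  obtain ⟨hgc, g', hg'c, hg'⟩ := hg
  exact ⟨hfc.sub hgc, fun x => f' x - g' x, hf'c.sub hg'c,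
    fun x hx => (hf' x hx).sub (hg' x hx)⟩

lemma mul (hf : HasContinuousPartialDerivOn f K S) (hg : HasContinuousPartialDerivOn g K S) :
    HasContinuousPartialDerivOn (fun x p => f x p * g x p) K S := by
  obtain ⟨hfc, f', hf'c, hf'⟩ := hf
  obtain ⟨hgc, g', hg'c, hg'⟩ := hg
  exact ⟨hfc.mul hgc, fun x => f' x * g x.1 x.2 + f x.1 x.2 * g' x,
    (hf'c.mul hgc).add (hfc.mul hg'c), fun x hx => (hf' x hx).mul (hg' x hx)⟩

lemma div (hf : HasContinuousPartialDerivOn f K S) (hg : HasContinuousPartialDerivOn g K S)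
    (hSK : S ⊆ K) (hg0 : ∀ x ∈ K, g x.1 x.2 ≠ 0) :
    HasContinuousPartialDerivOn (fun x p => f x p / g x p) K S := by
  obtain ⟨hfc, f', hf'c, hf'⟩ := hf
  obtain ⟨hgc, g', hg'c, hg'⟩ := hg
  exact ⟨hfc.div hgc hg0, fun x => (f' x * g x.1 x.2 - f x.1 x.2 * g' x) / g x.1 x.2 ^ 2,
    ((hf'c.mul hgc).sub (hfc.mul hg'c)).div (hgc.pow 2) fun x hx => pow_ne_zero 2 (hg0 x hx),
    fun x hx => (hf' x hx).div (hg' x hx) (hg0 x (hSK hx))⟩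

lemma comp {h h' : ℝ → ℝ} (hf : HasContinuousPartialDerivOn f K S)
    (hh : ∀ x ∈ K, ContinuousAt h (f x.1 x.2)) (hh' : ∀ x ∈ K, ContinuousAt h' (f x.1 x.2))
    (hderiv : ∀ x ∈ S, HasDerivAt h (h' (f x.1 x.2)) (f x.1 x.2)) :
    HasContinuousPartialDerivOn (fun x p => h (f x p)) K S := by
  obtain ⟨hfc, f', hf'c, hf'⟩ := hf
  refine ⟨fun x hx => (hh x hx).comp_continuousWithinAt (f := Function.uncurry f) (hfc x hx),
    fun x => h' (f x.1 x.2) * f' x, ContinuousOn.mul (fun x hx => ?_) hf'c,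
    fun x hx => (hderiv x hx).comp x.2 (hf' x hx)⟩
  exact (hh' x hx).comp_continuousWithinAt (f := Function.uncurry f) (hfc x hx)

lemma pow (hf : HasContinuousPartialDerivOn f K S) (n : ℕ) :
    HasContinuousPartialDerivOn (fun x p => f x p ^ n) K S :=
  hf.comp (h := fun y => y ^ n) (h' := fun y => n * y ^ (n - 1)) (fun _ _ => by fun_prop)
    (fun _ _ => by fun_prop) fun _ _ => hasDerivAt_pow n _

lemma polynomial_eval (hf : HasContinuousPartialDerivOn f K S) (P : Polynomial ℝ) :
    HasContinuousPartialDerivOn (fun x p => P.eval (f x p)) K S :=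
  hf.comp (fun _ _ => P.continuousAt) (fun _ _ => P.derivative.continuousAt)
    fun _ _ => P.hasDerivAt _

lemma sqrt (hf : HasContinuousPartialDerivOn f K S) (hSK : S ⊆ K)
    (hpos : ∀ x ∈ K, 0 < f x.1 x.2) :
    HasContinuousPartialDerivOn (fun x p => √(f x p)) K S :=
  hf.comp (h' := fun y => 1 / (2 * √y)) (fun _ _ => continuous_sqrt.continuousAt)
    (fun x hx => by
      have := sqrt_pos.2 (hpos x hx)
      fun_prop (disch := positivity))
    fun x hx => (hasDerivAt_id _).sqrt (hpos x (hSK hx)).ne' |>.congr_deriv (by simp)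

lemma cos_mul_sqrt (hf : HasContinuousPartialDerivOn f K S) (c : ℝ)
    (hpos : ∀ x ∈ S, 0 < f x.1 x.2) :
    HasContinuousPartialDerivOn (fun x p => cos (c * √(f x p))) K S :=
  hf.comp (h := fun y => cos (c * √y)) (h' := fun y => -(c ^ 2 / 2) * sinc (c * √y))
    (fun _ _ => by fun_prop)
    (fun _ _ => (continuous_const.mul
      (continuous_sinc.comp (continuous_const.mul continuous_sqrt))).continuousAt)
    fun x hx => hasDerivAt_cos_mul_sqrt c (hpos x hx)

end HasContinuousPartialDerivOn

end PartialDeriv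

noncomputable def kernelIntegrand (s : ℝ) (n : ℤ) (η u v p : ℝ) : ℝ :=
  (fun w =>
    (w * √(w ^ 2 + s ^ 2 * (p ^ 2 - w ^ 2)) * cos ((η / s) * √(p ^ 2 - w ^ 2)) *
        (Polynomial.Chebyshev.T ℝ |n|).eval (((1 - u) ^ 2 + 1 - w ^ 2) / (2 * (1 - u)))) /
      (√(p + w) * √(w + u) * √(1 + (u ^ 2 - w ^ 2) / (4 * (1 - u)))))
    (u + v * (p - u))

lemma KkernelReg_eq_integral (s : ℝ) (n : ℤ) (η p u : ℝ) :
    KkernelReg s n η p u =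
      √(1 - u) * ∫ v in (0 : ℝ)..1, arcsineWeight v * kernelIntegrand s n η u v p := by
  rw [KkernelReg]
  congr 1
  refine integral_congr fun v _ => ?_
  simp only [arcsineWeight, kernelIntegrand, div_eq_mul_inv, mul_inv]
  ring

lemma abs_sqrt_one_sub_mul_integral_le {u C : ℝ} {g : ℝ → ℝ} (hu : 0 ≤ u)
    (hg : ∀ v ∈ Icc (0 : ℝ) 1, |g v| ≤ C) :
    |√(1 - u) * ∫ v in (0 : ℝ)..1, arcsineWeight v * g v| ≤
      (∫ v in (0 : ℝ)..1, |arcsineWeight v|) * C := by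
  rw [abs_mul, abs_of_nonneg (sqrt_nonneg _)]
  exact (mul_le_of_le_one_left (abs_nonneg _) (sqrt_le_one.2 (by linarith))).trans
    (abs_integral_mul_le zero_le_one intervalIntegrable_arcsineWeight hg)

def kernelRegion (ε ε₁ : ℝ) : Set ((ℝ × ℝ) × ℝ) :=
  (Icc ε (1 - ε₁) ×ˢ Icc 0 1) ×ˢ Icc ε (1 - ε₁) ∩ {x | x.1.1 ≤ x.2}

lemma isCompact_kernelRegion (ε ε₁ : ℝ) : IsCompact (kernelRegion ε ε₁) :=
  ((isCompact_Icc.prod isCompact_Icc).prod isCompact_Icc).inter_right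
    (isClosed_le (by fun_prop) (by fun_prop))

lemma mk_mem_kernelRegion {ε ε₁ u v p : ℝ} (hu : ε ≤ u) (hup : u ≤ p) (hp : p ≤ 1 - ε₁)
    (hv : v ∈ Icc (0 : ℝ) 1) : ((u, v), p) ∈ kernelRegion ε ε₁ :=
  ⟨⟨⟨⟨hu, hup.trans hp⟩, hv⟩, hu.trans hup, hp⟩, hup⟩

lemma kernelRegion_pos (s : ℝ) {ε ε₁ : ℝ} (hε : 0 < ε) (hε₁ : 0 < ε₁) {x : (ℝ × ℝ) × ℝ}
    (hx : x ∈ kernelRegion ε ε₁) :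
    0 < 1 - x.1.1 ∧
      0 < (x.1.1 + x.1.2 * (x.2 - x.1.1)) ^ 2 +
        s ^ 2 * (x.2 ^ 2 - (x.1.1 + x.1.2 * (x.2 - x.1.1)) ^ 2) ∧
      0 < x.2 + (x.1.1 + x.1.2 * (x.2 - x.1.1)) ∧
      0 < x.1.1 + x.1.2 * (x.2 - x.1.1) + x.1.1 ∧
      0 < 1 + (x.1.1 ^ 2 - (x.1.1 + x.1.2 * (x.2 - x.1.1)) ^ 2) / (4 * (1 - x.1.1)) := by
  obtain ⟨⟨⟨⟨hu, -⟩, hv0, hv1⟩, -, hp⟩, hup : x.1.1 ≤ x.2⟩ := hx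
  have huw : x.1.1 ≤ x.1.1 + x.1.2 * (x.2 - x.1.1) := by nlinarith
  have hwp : x.1.1 + x.1.2 * (x.2 - x.1.1) ≤ x.2 := by nlinarith
  refine ⟨by linarith, ?_, by linarith, by linarith, ?_⟩
  · nlinarith [mul_nonneg (sq_nonneg s) (sub_nonneg.2 (pow_le_pow_left₀ (by linarith) hwp 2))]
  · rw [one_add_div (by linarith)]
    exact div_pos (by nlinarith) (by linarith)

lemma sq_sub_sq_pos_of_mem_kernelRegion {ε ε₁ : ℝ} (hε : 0 < ε) {x : (ℝ × ℝ) × ℝ}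
    (hx : x ∈ kernelRegion ε ε₁) (hv : x.1.2 < 1) (hup : x.1.1 < x.2) :
    0 < x.2 ^ 2 - (x.1.1 + x.1.2 * (x.2 - x.1.1)) ^ 2 := by
  obtain ⟨⟨⟨⟨hu, -⟩, hv0, -⟩, -⟩, -⟩ := hx
  -- `p - w = (1 - v) (p - u)`
  nlinarith [mul_pos (sub_pos.2 hv) (sub_pos.2 hup), mul_nonneg hv0 (sub_pos.2 hup).le]

open HasContinuousPartialDerivOn in
lemma hasContinuousPartialDerivOn_kernelIntegrand (s : ℝ) (n : ℤ) (η : ℝ) {ε ε₁ : ℝ}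
    (hε : 0 < ε) (hε₁ : 0 < ε₁) :
    HasContinuousPartialDerivOn (fun x p => kernelIntegrand s n η x.1 x.2 p)
      (kernelRegion ε ε₁) {x ∈ kernelRegion ε ε₁ | x.1.2 < 1 ∧ x.1.1 < x.2} := by
  set K := kernelRegion ε ε₁
  set S := {x ∈ K | x.1.2 < 1 ∧ x.1.1 < x.2}
  have hSK : S ⊆ K := sep_subset _ _
  have hpos := fun x (hx : x ∈ K) => kernelRegion_pos s hε hε₁ hx
  have hU : HasContinuousPartialDerivOn (fun (x : ℝ × ℝ) _ => x.1) K S :=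
    of_continuous continuous_fst
  have hW := hU.add ((of_continuous continuous_snd).mul (id.sub hU))
  have hQ := (id.pow 2).sub (hW.pow 2)
  have hSqrt := ((hW.pow 2).add ((const (s ^ 2)).mul hQ)).sqrt hSK fun x hx => (hpos x hx).2.1
  have hCos := hQ.cos_mul_sqrt (η / s) fun x hx =>
    sq_sub_sq_pos_of_mem_kernelRegion hε hx.1 hx.2.1 hx.2.2
  have hCheb := (((of_continuous (q := fun x : ℝ × ℝ => (1 - x.1) ^ 2 + 1) (by fun_prop)).sub
    (hW.pow 2)).div (of_continuous (q := fun x : ℝ × ℝ => 2 * (1 - x.1)) (by fun_prop)) hSK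
    fun x hx => by have := (hpos x hx).1; positivity).polynomial_eval (Polynomial.Chebyshev.T ℝ |n|)
  have hD₁ := (id.add hW).sqrt hSK fun x hx => (hpos x hx).2.2.1
  have hD₂ := (hW.add hU).sqrt hSK fun x hx => (hpos x hx).2.2.2.1
  have hD₃ := ((const 1).add (((hU.pow 2).sub (hW.pow 2)).div
    (of_continuous (q := fun x : ℝ × ℝ => 4 * (1 - x.1)) (by fun_prop)) hSK
    fun x hx => by have := (hpos x hx).1; positivity)).sqrt hSK fun x hx => (hpos x hx).2.2.2.2
  exact (((hW.mul hSqrt).mul hCos).mul hCheb).div ((hD₁.mul hD₂).mul hD₃) hSK fun x hx => by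
    obtain ⟨-, -, h₁, h₂, h₃⟩ := hpos x hx
    exact (mul_pos (mul_pos (sqrt_pos.2 h₁) (sqrt_pos.2 h₂)) (sqrt_pos.2 h₃)).ne'

theorem stmt15_general (s : ℝ) (n : ℤ) (η : ℝ) (ε ε₁ : ℝ)
    (hε : ε ∈ Set.Ioo (0 : ℝ) (1 / 2)) (hε₁ : ε₁ ∈ Set.Ioo (0 : ℝ) (1 / 2)) :
    ∃ M : ℝ, 0 < M ∧
      (∀ p u : ℝ, ε ≤ u → u ≤ p → p ≤ 1 - ε₁ → |KkernelReg s n η p u| ≤ M) ∧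
      (∀ u ∈ Set.Icc ε (1 - ε₁), ∀ p : ℝ, u < p → p < 1 - ε₁ →
        DifferentiableAt ℝ (fun p' => KkernelReg s n η p' u) p ∧
          |deriv (fun p' => KkernelReg s n η p' u) p| ≤ M) := by
  obtain ⟨hGc, G', hG'c, hGG'⟩ := hasContinuousPartialDerivOn_kernelIntegrand s n η hε.1 hε₁.1
  obtain ⟨C₀, hC₀⟩ := (isCompact_kernelRegion ε ε₁).exists_bound_of_continuousOn hGc
  obtain ⟨C₁, hC₁⟩ := (isCompact_kernelRegion ε ε₁).exists_bound_of_continuousOn hG'c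
  set I := ∫ v in (0 : ℝ)..1, |arcsineWeight v|
  refine ⟨max (max (I * C₀) (I * C₁)) 1, lt_max_of_lt_right one_pos,
    fun p u hu hup hp => ?_, fun u ⟨hu, _⟩ p hup hp => ?_⟩
  · rw [KkernelReg_eq_integral]
    exact (abs_sqrt_one_sub_mul_integral_le (hε.1.le.trans hu) fun v hv =>
      hC₀ _ (mk_mem_kernelRegion hu hup hp hv)).trans
      ((le_max_left _ _).trans (le_max_left _ _))
  have hmem : ∀ p' ∈ Ioo u (1 - ε₁), ∀ v ∈ Icc (0 : ℝ) 1, ((u, v), p') ∈ kernelRegion ε ε₁ :=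
    fun p' hp' v hv => mk_mem_kernelRegion hu hp'.1.le hp'.2.le hv
  have hD : HasDerivAt (fun p' => KkernelReg s n η p' u)
      (√(1 - u) * ∫ v in (0 : ℝ)..1, arcsineWeight v * G' ((u, v), p)) p := by
    simp_rw [KkernelReg_eq_integral]
    refine .const_mul _ (hasDerivAt_integral_mul (G' := fun p' v => G' ((u, v), p')) (C := C₁)
      zero_le_one (Ioo_mem_nhds hup hp) intervalIntegrable_arcsineWeight ?_ ?_ ?_ ?_)
    · exact fun p' hp' => hGc.comp (by fun_prop) (hmem p' hp')
    · exact hG'c.comp (by fun_prop) (hmem p ⟨hup, hp⟩)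
    · exact fun p' hp' v hv => hC₁ _ (hmem p' hp' v hv)
    · exact fun p' hp' v hv => hGG' _ ⟨hmem p' hp' v (Ioo_subset_Icc_self hv), hv.2, hp'.1⟩
  refine ⟨hD.differentiableAt, hD.deriv ▸ ?_⟩
  exact (abs_sqrt_one_sub_mul_integral_le (hε.1.le.trans hu) fun v hv =>
    hC₁ _ (mk_mem_kernelRegion hu hup.le hp.le hv)).trans
    ((le_max_right _ _).trans (le_max_left _ _))

/-- The regularized Volterra kernel and its `p`-derivative are bounded on the triangular
region `{(p,u) : ε ≤ u ≤ p ≤ 1 - ε₁}`. -/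
theorem stmt15 (s : ℝ) (hs : s ∈ Set.Ioc (0 : ℝ) 1) (n : ℤ) (η : ℝ) (ε ε₁ : ℝ)
    (hε : ε ∈ Set.Ioo (0 : ℝ) (1 / 2)) (hε₁ : ε₁ ∈ Set.Ioo (0 : ℝ) (1 / 2)) :
    ∃ M : ℝ, 0 < M ∧
      (∀ p u : ℝ, ε ≤ u → u ≤ p → p ≤ 1 - ε₁ → |KkernelReg s n η p u| ≤ M) ∧
      (∀ u ∈ Set.Icc ε (1 - ε₁), ∀ p : ℝ, u < p → p < 1 - ε₁ →
        DifferentiableAt ℝ (fun p' => KkernelReg s n η p' u) p ∧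
          |deriv (fun p' => KkernelReg s n η p' u) p| ≤ M) :=
  stmt15_general s n η ε ε₁ hε hε₁
end
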